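/- Let ρ : ℂ⁴ → ℝ be ρ(z) = |z₂|⁴ + |z₃|⁴ + |z₄|⁴ − Re z₁ and let γ : ℝ → ℂ⁴ be γ(θ) = ((2+cosθ)⁴ + (2+sinθ)⁴, 0, 2+sinθ, 2+cosθ). Then for every θ ∈ ℝ: ρ(γ(θ)) = 0 (so γ(θ) lies on ∂ω = {ρ = 0}), and ∂ρ(γ(θ))(γ′(θ)) = 0, i.e. γ is a complex-tangential curve in ∂ω. -/

import Mathlib

open Complex

noncomputable def delForm {E : Type*} [NormedAddCommGroup E] [NormedSpace ℂ E]
    (ρ : E → ℝ) (p ξ : E) : ℂ :=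
  (1 / 2 : ℂ) * (((fderiv ℝ ρ p ξ : ℝ) : ℂ)
    - Complex.I * ((fderiv ℝ ρ p (Complex.I • ξ) : ℝ) : ℂ))

noncomputable def leviForm {E : Type*} [NormedAddCommGroup E] [NormedSpace ℂ E]
    (ρ : E → ℝ) (p ξ : E) : ℝ :=
  (1 / 4 : ℝ) * (iteratedFDeriv ℝ 2 ρ p ![ξ, ξ]
    + iteratedFDeriv ℝ 2 ρ p ![Complex.I • ξ, Complex.I • ξ])

lemma myderiv (p : Fin 4 → ℂ) :
    HasFDerivAt (fun z : Fin 4 → ℂ =>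
      Complex.normSq (z 1) ^ 2 + Complex.normSq (z 2) ^ 2 + Complex.normSq (z 3) ^ 2 - (z 0).re)
      ((((4 * Complex.normSq (p 1) * (p 1).re) • ((Complex.reCLM).comp (ContinuousLinearMap.proj 1))
        + (4 * Complex.normSq (p 1) * (p 1).im) • ((Complex.imCLM).comp (ContinuousLinearMap.proj 1)))
      + ((4 * Complex.normSq (p 2) * (p 2).re) • ((Complex.reCLM).comp (ContinuousLinearMap.proj 2))
        + (4 * Complex.normSq (p 2) * (p 2).im) • ((Complex.imCLM).comp (ContinuousLinearMap.proj 2)))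
      + ((4 * Complex.normSq (p 3) * (p 3).re) • ((Complex.reCLM).comp (ContinuousLinearMap.proj 3))
        + (4 * Complex.normSq (p 3) * (p 3).im) • ((Complex.imCLM).comp (ContinuousLinearMap.proj 3))))
      - (Complex.reCLM).comp (ContinuousLinearMap.proj 0)) p := by
  have hre : ∀ k : Fin 4, HasFDerivAt (fun z : Fin 4 → ℂ => (z k).re)
      ((Complex.reCLM).comp (ContinuousLinearMap.proj k)) p :=
    fun k => (Complex.reCLM.hasFDerivAt).comp p (hasFDerivAt_apply k p)
  have him : ∀ k : Fin 4, HasFDerivAt (fun z : Fin 4 → ℂ => (z k).im)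
      ((Complex.imCLM).comp (ContinuousLinearMap.proj k)) p :=
    fun k => (Complex.imCLM.hasFDerivAt).comp p (hasFDerivAt_apply k p)
  have hns : ∀ k : Fin 4, HasFDerivAt (fun z : Fin 4 → ℂ => Complex.normSq (z k) ^ 2)
      ((4 * Complex.normSq (p k) * (p k).re) • ((Complex.reCLM).comp (ContinuousLinearMap.proj k))
        + (4 * Complex.normSq (p k) * (p k).im) • ((Complex.imCLM).comp (ContinuousLinearMap.proj k))) p := by
    intro k
    have h1 : HasFDerivAt (fun z : Fin 4 → ℂ => (z k).re * (z k).re + (z k).im * (z k).im) _ p :=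
      ((hre k).mul (hre k)).add ((him k).mul (him k))
    have h2 : HasFDerivAt (fun z : Fin 4 → ℂ => ((z k).re * (z k).re + (z k).im * (z k).im) *
        ((z k).re * (z k).re + (z k).im * (z k).im)) _ p := h1.mul h1
    convert h2 using 1
    · rfl
    · rfl
    · funext z; simp [Complex.normSq_apply]; ring
    · ext ξ
      simp [Complex.normSq_apply, ContinuousLinearMap.smul_apply, ContinuousLinearMap.add_apply,
        ContinuousLinearMap.comp_apply, smul_eq_mul]
      ring
  exact (((hns 1).add (hns 2)).add (hns 3)).sub (hre 0)

/-- The curve `γ(θ) = ((2+cosθ)⁴ + (2+sinθ)⁴, 0, 2+sinθ, 2+cosθ)` lies on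
`∂ω = {|z₂|⁴ + |z₃|⁴ + |z₄|⁴ - Re z₁ = 0}` and is complex-tangential there. -/
theorem stmt_7 (ρ : (Fin 4 → ℂ) → ℝ)
    (hρ : ∀ z : Fin 4 → ℂ,
      ρ z = (‖z 1‖) ^ 4 + (‖z 2‖) ^ 4 + (‖z 3‖) ^ 4
              - (z 0).re)
    (γ : ℝ → Fin 4 → ℂ)
    (hγ : ∀ θ : ℝ, γ θ =
      ![(((2 + Real.cos θ) ^ 4 + (2 + Real.sin θ) ^ 4 : ℝ) : ℂ), 0,
        ((2 + Real.sin θ : ℝ) : ℂ), ((2 + Real.cos θ : ℝ) : ℂ)]) :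
    ∀ θ : ℝ, ρ (γ θ) = 0 ∧
      delForm ρ (γ θ)
        ![((-4 * Real.sin θ * (2 + Real.cos θ) ^ 3
            + 4 * Real.cos θ * (2 + Real.sin θ) ^ 3 : ℝ) : ℂ), 0,
          ((Real.cos θ : ℝ) : ℂ), ((-Real.sin θ : ℝ) : ℂ)] = 0 := by
  have habs : ∀ w : ℂ, ‖w‖ ^ 4 = Complex.normSq w ^ 2 := by
    intro w
    rw [show (4:ℕ) = 2*2 from rfl, pow_mul, Complex.sq_norm]
  have hρ2 : ρ = fun z : Fin 4 → ℂ =>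
      Complex.normSq (z 1) ^ 2 + Complex.normSq (z 2) ^ 2 + Complex.normSq (z 3) ^ 2 - (z 0).re := by
    funext z; rw [hρ z, habs, habs, habs]
  intro θ
  have hγ0 : γ θ 0 = (((2 + Real.cos θ) ^ 4 + (2 + Real.sin θ) ^ 4 : ℝ) : ℂ) := by rw [hγ θ]; rfl
  constructor
  · rw [hρ2]
    have hγ1 : γ θ 1 = 0 := by rw [hγ θ]; rfl
    have hγ2 : γ θ 2 = ((2 + Real.sin θ : ℝ) : ℂ) := by rw [hγ θ]; rfl
    have hγ3 : γ θ 3 = ((2 + Real.cos θ : ℝ) : ℂ) := by rw [hγ θ]; rfl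
    simp only [hγ0, hγ1, hγ2, hγ3, Complex.normSq_ofReal, Complex.normSq_zero,
      Complex.ofReal_re]
    ring
  · have hd := (myderiv (γ θ)).fderiv
    rw [delForm, hρ2, hd]
    set ξ : Fin 4 → ℂ :=
      ![((-4 * Real.sin θ * (2 + Real.cos θ) ^ 3
            + 4 * Real.cos θ * (2 + Real.sin θ) ^ 3 : ℝ) : ℂ), 0,
          ((Real.cos θ : ℝ) : ℂ), ((-Real.sin θ : ℝ) : ℂ)] with hξ
    have hγ1 : γ θ 1 = 0 := by rw [hγ θ]; rfl
    have hγ2 : γ θ 2 = ((2 + Real.sin θ : ℝ) : ℂ) := by rw [hγ θ]; rfl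
    have hγ3 : γ θ 3 = ((2 + Real.cos θ : ℝ) : ℂ) := by rw [hγ θ]; rfl
    have hξ0 : ξ 0 = ((-4 * Real.sin θ * (2 + Real.cos θ) ^ 3
            + 4 * Real.cos θ * (2 + Real.sin θ) ^ 3 : ℝ) : ℂ) := rfl
    have hξ2 : ξ 2 = ((Real.cos θ : ℝ) : ℂ) := rfl
    have hξ3 : ξ 3 = ((-Real.sin θ : ℝ) : ℂ) := rfl
    have hI : ∀ k : Fin 4, (Complex.I • ξ) k = Complex.I * ξ k := fun k => rfl
    simp only [ContinuousLinearMap.sub_apply, ContinuousLinearMap.add_apply,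
      ContinuousLinearMap.smul_apply, ContinuousLinearMap.comp_apply,
      ContinuousLinearMap.proj_apply, Complex.reCLM_apply, Complex.imCLM_apply,
      hγ1, hγ2, hγ3, hξ0, hξ2, hξ3, hI, smul_eq_mul,
      Complex.normSq_zero, Complex.zero_re, Complex.zero_im,
      Complex.normSq_ofReal, Complex.ofReal_re, Complex.ofReal_im,
      Complex.mul_re, Complex.mul_im, Complex.I_re, Complex.I_im]
    push_cast
    ring_nf
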